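/- arXiv:2511.02867 — 2 statements merged into one kernel-verified Lean document; each statement's English description precedes it below -/
import Mathlib

section
/- For any fixed s ≥ 0, the function t ↦ Z_s Z_{t-s} / Z_t is decreasing on [s, ∞). Equivalently, for 0 ≤ r ≤ s ≤ t one has Z_s Z_{t-r} ≤ Z_t Z_{s-r}. -/
open MeasureTheory Real Set

/-- Laplace transform of a measure on ℝ. -/
noncomputable def lapZ (μ : Measure ℝ) (t : ℝ) : ℝ := ∫ x, Real.exp (-t * x) ∂μ

/-!
Write `φ = log Z`. Normalising `e^{-ax}` and `e^{-bx}` by `Z_a` and `Z_b` and applying convexity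
of `exp` pointwise before integrating shows that `φ` is convex on `[0, ∞)`. Convex functions have
increasing increments, `φ(x + h) - φ(x) ≤ φ(y + h) - φ(y)` for `x ≤ y`, `h ≥ 0`; with
`x = s - r`, `y = t - r`, `h = r` this is `Z_s Z_{t-r} ≤ Z_t Z_{s-r}`, and for `s ≤ t₁ ≤ t₂`
the same inequality for the triple `(s, t₁, t₂)` says that `Z_s Z_{t-s} / Z_t` decreases.
-/

theorem ConvexOn.map_add_sub_map_le {s : Set ℝ} {f : ℝ → ℝ} (hf : ConvexOn ℝ s f)
    {x y h : ℝ} (hx : x ∈ s) (hyh : y + h ∈ s) (hxy : x ≤ y) (hh : 0 ≤ h) :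
    f (x + h) - f x ≤ f (y + h) - f y := by
  rcases hh.eq_or_lt with rfl | hh
  · simp
  have hxh : x + h ∈ s := hf.1.ordConnected.out hx hyh ⟨by linarith, by linarith⟩
  have hy : y ∈ s := hf.1.ordConnected.out hx hyh ⟨hxy, by linarith⟩
  have hslope : slope f x (x + h) ≤ slope f y (y + h) :=
    calc slope f x (x + h)
        ≤ slope f x (y + h) :=
          hf.slope_mono hx ⟨hxh, by simp [hh.ne']⟩ ⟨hyh, by simp; linarith⟩ (by linarith)
      _ = slope f (y + h) x := slope_comm f x (y + h)
      _ ≤ slope f (y + h) y :=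
          hf.slope_mono hyh ⟨hx, by simp; linarith⟩ ⟨hy, by simp [hh.ne']⟩ hxy
      _ = slope f y (y + h) := slope_comm f (y + h) y
  simp only [slope_def_field, add_sub_cancel_left] at hslope
  exact (div_le_div_iff_of_pos_right hh).1 hslope

theorem mul_map_le_of_convexOn_log {s : Set ℝ} {f : ℝ → ℝ} (hpos : ∀ x ∈ s, 0 < f x)
    (hf : ConvexOn ℝ s (fun x => log (f x))) {x y h : ℝ} (hx : x ∈ s) (hyh : y + h ∈ s)
    (hxy : x ≤ y) (hh : 0 ≤ h) :
    f (x + h) * f y ≤ f (y + h) * f x := by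
  have hxh : x + h ∈ s := hf.1.ordConnected.out hx hyh ⟨by linarith, by linarith⟩
  have hy : y ∈ s := hf.1.ordConnected.out hx hyh ⟨hxy, by linarith⟩
  rw [← log_le_log_iff (by have := hpos _ hxh; have := hpos _ hy; positivity)
    (by have := hpos _ hyh; have := hpos _ hx; positivity),
    log_mul (hpos _ hxh).ne' (hpos _ hy).ne', log_mul (hpos _ hyh).ne' (hpos _ hx).ne']
  linarith [hf.map_add_sub_map_le hx hyh hxy hh]

namespace ProbabilityTheory

variable {Ω : Type*} {m : MeasurableSpace Ω} {X : Ω → ℝ} {μ : Measure Ω}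

theorem convexOn_log_mgf (hμ : μ ≠ 0) :
    ConvexOn ℝ (integrableExpSet X μ) (fun t => log (mgf X μ t)) := by
  refine ⟨convex_integrableExpSet, fun a ha b hb wa wb hwa hwb hab => ?_⟩
  have hA := mgf_pos' hμ ha
  have hB := mgf_pos' hμ hb
  set K := wa * log (mgf X μ a) + wb * log (mgf X μ b) with hK
  have pointwise : ∀ ω, exp ((wa * a + wb * b) * X ω) ≤
      exp K * (wa * (exp (a * X ω) / mgf X μ a) + wb * (exp (b * X ω) / mgf X μ b)) := by
    intro ω
    have h := convexOn_exp.2 (mem_univ (a * X ω - log (mgf X μ a)))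
      (mem_univ (b * X ω - log (mgf X μ b))) hwa hwb hab
    simp only [smul_eq_mul, exp_sub, exp_log hA, exp_log hB] at h
    calc exp ((wa * a + wb * b) * X ω)
        = exp K *
            exp (wa * (a * X ω - log (mgf X μ a)) + wb * (b * X ω - log (mgf X μ b))) := by
          rw [← exp_add, hK]; ring_nf
      _ ≤ _ := mul_le_mul_of_nonneg_left h (exp_pos K).le
  have hle : mgf X μ (wa * a + wb * b) ≤ exp K := by
    calc mgf X μ (wa * a + wb * b)
        ≤ ∫ ω, exp K *
            (wa * (exp (a * X ω) / mgf X μ a) + wb * (exp (b * X ω) / mgf X μ b)) ∂μ :=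
          integral_mono_of_nonneg (.of_forall fun _ => (exp_pos _).le)
            (((ha.div_const _).const_mul _).add ((hb.div_const _).const_mul _) |>.const_mul _)
            (.of_forall pointwise)
      _ = exp K * (wa * (mgf X μ a / mgf X μ a) + wb * (mgf X μ b / mgf X μ b)) := by
          rw [integral_const_mul, integral_add ((ha.div_const _).const_mul _)
            ((hb.div_const _).const_mul _), integral_const_mul, integral_const_mul,
            integral_div, integral_div]
          rfl
      _ = exp K := by rw [div_self hA.ne', div_self hB.ne', mul_one, mul_one, hab, mul_one]
  have hpos := mgf_pos' hμ (convex_integrableExpSet ha hb hwa hwb hab)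
  simp only [smul_eq_mul] at hpos ⊢
  exact (log_le_iff_le_exp hpos).2 hle

end ProbabilityTheory

open ProbabilityTheory

section LaplaceTransform

variable {μ : Measure ℝ} {c : ℝ}

theorem lapZ_eq_mgf (μ : Measure ℝ) (t : ℝ) : lapZ μ t = mgf id μ (-t) := by
  simp [lapZ, mgf]

theorem neg_mem_integrableExpSet_of_measure_Iio_eq_zero [IsFiniteMeasure μ]
    (hc : μ (Iio c) = 0) {t : ℝ} (ht : 0 ≤ t) : -t ∈ integrableExpSet id μ := by
  have hge : ∀ᵐ x ∂μ, c ≤ x := by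
    rw [ae_iff]; simp only [not_le]; exact hc
  refine (integrable_const (exp (-t * c))).mono' (by fun_prop) ?_
  filter_upwards [hge] with x hx
  rw [norm_of_nonneg (exp_pos _).le, id]
  exact exp_le_exp.2 (by nlinarith)

theorem lapZ_pos [IsFiniteMeasure μ] [NeZero μ] (hc : μ (Iio c) = 0) {t : ℝ} (ht : 0 ≤ t) :
    0 < lapZ μ t :=
  lapZ_eq_mgf μ t ▸
    mgf_pos' (NeZero.ne μ) (neg_mem_integrableExpSet_of_measure_Iio_eq_zero hc ht)

theorem convexOn_log_lapZ [IsFiniteMeasure μ] [NeZero μ] (hc : μ (Iio c) = 0) :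
    ConvexOn ℝ (Ici 0) (fun t => log (lapZ μ t)) := by
  have h := (convexOn_log_mgf (X := id) (NeZero.ne μ)).comp_linearMap (-LinearMap.id)
  refine (h.subset (fun t ht => ?_) (convex_Ici 0)).congr fun t _ => ?_
  · exact neg_mem_integrableExpSet_of_measure_Iio_eq_zero hc ht
  · simp [lapZ_eq_mgf]

theorem lapZ_mul_lapZ_sub_le [IsFiniteMeasure μ] [NeZero μ] (hc : μ (Iio c) = 0) {r s t : ℝ}
    (hr : 0 ≤ r) (hrs : r ≤ s) (hst : s ≤ t) :
    lapZ μ s * lapZ μ (t - r) ≤ lapZ μ t * lapZ μ (s - r) := by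
  have h := mul_map_le_of_convexOn_log (s := Ici 0) (fun u hu => lapZ_pos hc hu)
    (convexOn_log_lapZ hc) (x := s - r) (y := t - r) (h := r) (sub_nonneg.2 hrs)
    (by rw [sub_add_cancel, mem_Ici]; linarith) (by linarith) hr
  simpa only [sub_add_cancel] using h

theorem antitoneOn_lapZ_mul_lapZ_sub_div [IsFiniteMeasure μ] [NeZero μ] (hc : μ (Iio c) = 0)
    {s : ℝ} (hs : 0 ≤ s) :
    AntitoneOn (fun t => lapZ μ s * lapZ μ (t - s) / lapZ μ t) (Ici s) := by
  intro t₁ ht₁ t₂ ht₂ ht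
  rw [div_le_div_iff₀ (lapZ_pos hc (hs.trans ht₂)) (lapZ_pos hc (hs.trans ht₁))]
  calc lapZ μ s * lapZ μ (t₂ - s) * lapZ μ t₁
      = lapZ μ s * (lapZ μ t₁ * lapZ μ (t₂ - s)) := by ring
    _ ≤ lapZ μ s * (lapZ μ t₂ * lapZ μ (t₁ - s)) :=
        mul_le_mul_of_nonneg_left (lapZ_mul_lapZ_sub_le hc hs ht₁ ht) (lapZ_pos hc hs).le
    _ = lapZ μ s * lapZ μ (t₁ - s) * lapZ μ t₂ := by ring

end LaplaceTransform

/-- For fixed `s ≥ 0`, the function `t ↦ Z_s Z_{t-s} / Z_t` is decreasing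
on `[s, ∞)`; equivalently `Z_s Z_{t-r} ≤ Z_t Z_{s-r}` for `0 ≤ r ≤ s ≤ t`. -/
theorem stmt_2 (μ : Measure ℝ) [IsProbabilityMeasure μ]
    (hbdd : ∃ c : ℝ, μ (Set.Iio c) = 0) :
    (∀ s : ℝ, 0 ≤ s →
        AntitoneOn (fun t => lapZ μ s * lapZ μ (t - s) / lapZ μ t) (Set.Ici s))
      ∧ ∀ r s t : ℝ, 0 ≤ r → r ≤ s → s ≤ t →
          lapZ μ s * lapZ μ (t - r) ≤ lapZ μ t * lapZ μ (s - r) := by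
  obtain ⟨c, hc⟩ := hbdd
  exact ⟨fun s => antitoneOn_lapZ_mul_lapZ_sub_div hc,
    fun r s t => lapZ_mul_lapZ_sub_le hc⟩
end

section
/- If μ is supported on [0,∞), μ({0}) > 0 and ∫_{(0,∞)} x^{-1} dμ(x) < ∞, then there exists a continuous function R: [0,∞) → ℝ with R(t) → 0 as t → ∞ such that for all t > 0, ∫₀ᵗ Z_{t-s} Z_s ds = t·μ({0})·Z_t + 2·μ({0})·∫_{(0,∞)} x^{-1} dμ(x) + R(t). -/
/-!
Write `Z_t = a + F(t)` with `a = μ{0}` and `F` the Laplace transform of `μ` restricted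
to `(0,∞)`. Expanding the product,
`∫₀ᵗ Z_{t-s} Z_s ds = a²t + 2a ∫₀ᵗ F + ∫₀ᵗ F(t-s) F(s) ds`, while `t a Z_t = a²t + a t F(t)`.
By Fubini `∫₀ᵗ F = ∫ (1 - e^{-tx}) x⁻¹ dμ`, which increases to `∫ x⁻¹ dμ`; dominated
convergence with the bound `x⁻¹` gives `t F(t) → 0`; and since `F` is nonnegative and
decreasing, `∫₀ᵗ F(t-s) F(s) ds ≤ 2 F(t/2) ∫₀ᵗ F → 0`.
-/

open MeasureTheory Real Set Filter intervalIntegral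

lemma norm_exp_neg_mul_le_one {t x : ℝ} (ht : 0 ≤ t) (hx : 0 ≤ x) :
    ‖exp (-t * x)‖ ≤ 1 := by
  rw [Real.norm_eq_abs, abs_exp, exp_le_one_iff]
  nlinarith

lemma integral_exp_neg_mul {x : ℝ} (hx : x ≠ 0) (t : ℝ) :
    ∫ s in (0 : ℝ)..t, exp (-s * x) = (1 - exp (-t * x)) * x⁻¹ := by
  simp_rw [neg_mul, ← mul_neg]
  rw [integral_comp_mul_right (fun s => exp s) (neg_ne_zero.mpr hx), integral_exp]
  simp only [zero_mul, exp_zero, smul_eq_mul, inv_neg]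
  ring

lemma norm_one_sub_exp_neg_mul_mul_inv_le {t x : ℝ} (ht : 0 ≤ t) (hx : 0 < x) :
    ‖(1 - exp (-t * x)) * x⁻¹‖ ≤ x⁻¹ := by
  have h1 : exp (-t * x) ≤ 1 := exp_le_one_iff.mpr (by nlinarith)
  rw [Real.norm_eq_abs, abs_of_nonneg (mul_nonneg (by linarith) (inv_pos.mpr hx).le)]
  exact mul_le_of_le_one_left (inv_pos.mpr hx).le (by linarith [exp_pos (-t * x)])

section SelfConvolution

variable {f : ℝ → ℝ} {t : ℝ}

lemma uIcc_zero_subset_Ici (ht : 0 ≤ t) : uIcc 0 t ⊆ Ici 0 := by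
  rw [uIcc_of_le ht]
  exact Icc_subset_Ici_self

lemma continuousOn_comp_sub_uIcc (hf : ContinuousOn f (Ici 0)) (ht : 0 ≤ t) :
    ContinuousOn (fun s => f (t - s)) (uIcc 0 t) := by
  refine hf.comp (by fun_prop) fun s hs => ?_
  rw [uIcc_of_le ht] at hs
  exact sub_nonneg.mpr hs.2

lemma intervalIntegrable_comp_sub_mul (hf : ContinuousOn f (Ici 0)) (ht : 0 ≤ t) :
    IntervalIntegrable (fun s => f (t - s) * f s) volume 0 t :=
  ((continuousOn_comp_sub_uIcc hf ht).mul (hf.mono (uIcc_zero_subset_Ici ht))).intervalIntegrable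

lemma integral_comp_sub_self (t : ℝ) :
    ∫ s in (0 : ℝ)..t, f (t - s) = ∫ s in (0 : ℝ)..t, f s := by
  simp [integral_comp_sub_left]

lemma continuousOn_integral_comp_sub_mul (hf : ContinuousOn f (Ici 0)) :
    ContinuousOn (fun t => ∫ s in (0 : ℝ)..t, f (t - s) * f s) (Ici 0) := by
  set g : ℝ → ℝ := fun x => f (max x 0)
  have hg : Continuous g := hf.comp_continuous (by fun_prop) fun x => le_max_right x 0
  refine (continuous_parametric_intervalIntegral_of_continuous
    (f := fun t s => g (t - s) * g s) (by fun_prop) continuous_id).continuousOn.congr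
    fun t ht => integral_congr fun s hs => ?_
  rw [uIcc_of_le ht] at hs
  simp only [g, max_eq_left hs.1, max_eq_left (sub_nonneg.mpr hs.2)]

lemma integral_comp_sub_mul_le (hf : ContinuousOn f (Ici 0)) (hf_anti : AntitoneOn f (Ici 0))
    (hf_nonneg : ∀ x, 0 ≤ x → 0 ≤ f x) (ht : 0 ≤ t) :
    ∫ s in (0 : ℝ)..t, f (t - s) * f s ≤ 2 * f (t / 2) * ∫ s in (0 : ℝ)..t, f s := by
  have hI : IntervalIntegrable f volume 0 t :=
    (hf.mono (uIcc_zero_subset_Ici ht)).intervalIntegrable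
  have hI' : IntervalIntegrable (fun s => f (t - s)) volume 0 t :=
    (continuousOn_comp_sub_uIcc hf ht).intervalIntegrable
  -- one of `s`, `t - s` is at least `t / 2`
  have hpoint : ∀ s ∈ Icc 0 t, f (t - s) * f s ≤ f (t / 2) * (f s + f (t - s)) := by
    intro s ⟨hs0, hst⟩
    have h₁ := hf_nonneg s hs0
    have h₂ := hf_nonneg (t - s) (by linarith)
    have h₃ := hf_nonneg (t / 2) (by linarith)
    rcases le_total s (t / 2) with hs | hs
    · have : f (t - s) ≤ f (t / 2) :=
        hf_anti (mem_Ici.mpr (by linarith)) (mem_Ici.mpr (by linarith)) (by linarith)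
      nlinarith
    · have : f s ≤ f (t / 2) := hf_anti (mem_Ici.mpr (by linarith)) (mem_Ici.mpr hs0) hs
      nlinarith
  calc ∫ s in (0 : ℝ)..t, f (t - s) * f s
      ≤ ∫ s in (0 : ℝ)..t, f (t / 2) * (f s + f (t - s)) :=
        integral_mono_on ht (intervalIntegrable_comp_sub_mul hf ht)
          ((hI.add hI').const_mul _) hpoint
    _ = 2 * f (t / 2) * ∫ s in (0 : ℝ)..t, f s := by
        rw [intervalIntegral.integral_const_mul, integral_add hI hI', integral_comp_sub_self]
        ring

lemma integral_comp_sub_mul_of_eqOn_const_add {g : ℝ → ℝ} {a : ℝ}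
    (hg : EqOn g (fun x => a + f x) (Ici 0)) (hf : ContinuousOn f (Ici 0)) (ht : 0 ≤ t) :
    ∫ s in (0 : ℝ)..t, g (t - s) * g s
      = a ^ 2 * t + 2 * a * (∫ s in (0 : ℝ)..t, f s)
        + ∫ s in (0 : ℝ)..t, f (t - s) * f s := by
  have hI : IntervalIntegrable f volume 0 t :=
    (hf.mono (uIcc_zero_subset_Ici ht)).intervalIntegrable
  have hI' : IntervalIntegrable (fun s => f (t - s)) volume 0 t :=
    (continuousOn_comp_sub_uIcc hf ht).intervalIntegrable
  have hexpand : EqOn (fun s => g (t - s) * g s)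
      (fun s => a ^ 2 + (a * f s + a * f (t - s)) + f (t - s) * f s) (uIcc 0 t) := by
    intro s hs
    rw [uIcc_of_le ht] at hs
    simp only [hg (mem_Ici.mpr (sub_nonneg.mpr hs.2)), hg (mem_Ici.mpr hs.1)]
    ring
  rw [integral_congr hexpand, integral_add (intervalIntegrable_const.add
      ((hI.const_mul a).add (hI'.const_mul a))) (intervalIntegrable_comp_sub_mul hf ht),
    integral_add intervalIntegrable_const ((hI.const_mul a).add (hI'.const_mul a)),
    integral_add (hI.const_mul a) (hI'.const_mul a), intervalIntegral.integral_const,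
    intervalIntegral.integral_const_mul, intervalIntegral.integral_const_mul,
    integral_comp_sub_self]
  simp only [sub_zero, smul_eq_mul]
  ring

end SelfConvolution

lemma lapZ_nonneg (ν : Measure ℝ) (t : ℝ) : 0 ≤ lapZ ν t :=
  integral_nonneg fun _ => (exp_pos _).le

lemma tendsto_mul_lapZ_atTop {ν : Measure ℝ} (hν : ∀ᵐ x ∂ν, 0 < x)
    (hinv : Integrable (fun x => x⁻¹) ν) :
    Tendsto (fun t => t * lapZ ν t) atTop (nhds 0) := by
  simp_rw [lapZ, ← MeasureTheory.integral_const_mul]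
  have := tendsto_integral_filter_of_dominated_convergence (fun x => x⁻¹)
    (F := fun t x => t * exp (-t * x)) (μ := ν) (l := atTop) (f := fun _ => 0)
    (Eventually.of_forall fun _ => by fun_prop)
    (by
      filter_upwards [eventually_ge_atTop 0] with t ht
      filter_upwards [hν] with x hx
      -- `t e^{-tx} ≤ x⁻¹` because `1 + tx ≤ e^{tx}`
      rw [Real.norm_eq_abs, abs_mul, abs_of_nonneg ht, abs_exp, neg_mul, exp_neg,
        ← div_eq_mul_inv, div_le_iff₀ (exp_pos _), inv_mul_eq_div, le_div_iff₀ hx]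
      linarith [add_one_le_exp (t * x)])
    hinv
    (hν.mono fun x hx => by
      have := ((tendsto_pow_mul_exp_neg_atTop_nhds_zero 1).comp
        (tendsto_id.atTop_mul_const hx)).mul_const x⁻¹
      rw [zero_mul] at this
      refine this.congr fun t => ?_
      simp only [Function.comp_apply, id_eq, pow_one, neg_mul]
      field_simp)
  simpa using this

section Laplace

variable {ν : Measure ℝ} [IsFiniteMeasure ν]

lemma integrable_exp_neg_mul (hν : ∀ᵐ x ∂ν, 0 ≤ x) {t : ℝ} (ht : 0 ≤ t) :
    Integrable (fun x => exp (-t * x)) ν :=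
  (integrable_const 1).mono' (by fun_prop)
    (hν.mono fun _ hx => norm_exp_neg_mul_le_one ht hx)

lemma continuousOn_lapZ (hν : ∀ᵐ x ∂ν, 0 ≤ x) : ContinuousOn (lapZ ν) (Ici 0) :=
  continuousOn_of_dominated (fun _ _ => by fun_prop)
    (fun _ ht => hν.mono fun _ hx => norm_exp_neg_mul_le_one ht hx) (integrable_const 1)
    (ae_of_all _ fun _ => by fun_prop)

lemma antitoneOn_lapZ (hν : ∀ᵐ x ∂ν, 0 ≤ x) : AntitoneOn (lapZ ν) (Ici 0) := by
  intro s hs t ht hst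
  refine integral_mono_ae (integrable_exp_neg_mul hν ht) (integrable_exp_neg_mul hν hs) ?_
  filter_upwards [hν] with x hx
  exact exp_le_exp.mpr (by nlinarith)

lemma tendsto_lapZ_atTop (hν : ∀ᵐ x ∂ν, 0 < x) : Tendsto (lapZ ν) atTop (nhds 0) := by
  have := tendsto_integral_filter_of_dominated_convergence (fun _ => (1 : ℝ))
    (F := fun t x => exp (-t * x)) (μ := ν) (l := atTop) (f := fun _ => 0)
    (Eventually.of_forall fun _ => by fun_prop)
    (by
      filter_upwards [eventually_ge_atTop 0] with t ht
      exact hν.mono fun _ hx => norm_exp_neg_mul_le_one ht hx.le)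
    (integrable_const 1)
    (hν.mono fun x hx => by
      simpa only [Function.comp_def, id_eq, neg_mul] using
        tendsto_exp_neg_atTop_nhds_zero.comp (tendsto_id.atTop_mul_const hx))
  rw [integral_zero] at this
  exact this

lemma integral_lapZ (hν : ∀ᵐ x ∂ν, 0 < x) {t : ℝ} (ht : 0 ≤ t) :
    ∫ s in (0 : ℝ)..t, lapZ ν s = ∫ x, (1 - exp (-t * x)) * x⁻¹ ∂ν := by
  have hprod : Integrable (Function.uncurry fun s x => exp (-s * x))
      ((volume.restrict (Ioc 0 t)).prod ν) := by
    refine (integrable_const 1).mono' (by fun_prop) ?_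
    filter_upwards [Measure.quasiMeasurePreserving_fst.ae (ae_restrict_mem measurableSet_Ioc),
      Measure.quasiMeasurePreserving_snd.ae hν] with p hs hx
    exact norm_exp_neg_mul_le_one hs.1.le hx.le
  rw [integral_of_le ht]
  unfold lapZ
  rw [integral_integral_swap hprod]
  refine integral_congr_ae (hν.mono fun x hx => ?_)
  simp only
  rw [← integral_of_le ht, integral_exp_neg_mul hx.ne']

lemma integral_lapZ_le (hν : ∀ᵐ x ∂ν, 0 < x) (hinv : Integrable (fun x => x⁻¹) ν)
    {t : ℝ} (ht : 0 ≤ t) : ∫ s in (0 : ℝ)..t, lapZ ν s ≤ ∫ x, x⁻¹ ∂ν := by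
  have hbound : ∀ᵐ x ∂ν, ‖(1 - exp (-t * x)) * x⁻¹‖ ≤ x⁻¹ :=
    hν.mono fun _ hx => norm_one_sub_exp_neg_mul_mul_inv_le ht hx
  rw [integral_lapZ hν ht]
  exact integral_mono_ae (hinv.mono' (by fun_prop) hbound) hinv
    (hbound.mono fun _ hx => (Real.le_norm_self _).trans hx)

lemma tendsto_integral_lapZ (hν : ∀ᵐ x ∂ν, 0 < x) (hinv : Integrable (fun x => x⁻¹) ν) :
    Tendsto (fun t => ∫ s in (0 : ℝ)..t, lapZ ν s) atTop (nhds (∫ x, x⁻¹ ∂ν)) := by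
  refine (tendsto_integral_filter_of_dominated_convergence (fun x => x⁻¹)
    (F := fun t x => (1 - exp (-t * x)) * x⁻¹) (μ := ν) (l := atTop)
    (Eventually.of_forall fun _ => by fun_prop) ?_ hinv ?_).congr' ?_
  · filter_upwards [eventually_ge_atTop 0] with t ht
    exact hν.mono fun _ hx => norm_one_sub_exp_neg_mul_mul_inv_le ht hx
  · filter_upwards [hν] with x hx
    have := ((tendsto_exp_neg_atTop_nhds_zero.comp (tendsto_id.atTop_mul_const hx)).const_sub
      1).mul_const x⁻¹
    simpa only [Function.comp_def, id_eq, neg_mul, sub_zero, one_mul] using this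
  · filter_upwards [eventually_ge_atTop 0] with t ht
    exact (integral_lapZ hν ht).symm

lemma lapZ_eq_add_lapZ_restrict_Ioi (hν : ∀ᵐ x ∂ν, 0 ≤ x) {t : ℝ} (ht : 0 ≤ t) :
    lapZ ν t = (ν {0}).toReal + lapZ (ν.restrict (Ioi 0)) t := by
  have hcompl : ({0}ᶜ : Set ℝ) =ᵐ[ν] Ioi 0 := by
    filter_upwards [hν] with x hx
    exact propext ⟨fun h => lt_of_le_of_ne hx (Ne.symm h), fun h => h.ne'⟩
  rw [lapZ, ← integral_add_compl (measurableSet_singleton 0) (integrable_exp_neg_mul hν ht),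
    integral_singleton, setIntegral_congr_set hcompl]
  simp [lapZ, measureReal_def]

lemma tendsto_integral_comp_sub_mul_lapZ (hν : ∀ᵐ x ∂ν, 0 < x)
    (hinv : Integrable (fun x => x⁻¹) ν) :
    Tendsto (fun t => ∫ s in (0 : ℝ)..t, lapZ ν (t - s) * lapZ ν s) atTop (nhds 0) := by
  have hν' : ∀ᵐ x ∂ν, 0 ≤ x := hν.mono fun _ hx => hx.le
  have hupper : Tendsto (fun t => 2 * lapZ ν (t / 2) * ∫ x, x⁻¹ ∂ν) atTop (nhds 0) := by
    simpa using ((tendsto_lapZ_atTop hν).comp (tendsto_id.atTop_div_const two_pos)).const_mul 2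
      |>.mul_const (∫ x, x⁻¹ ∂ν)
  refine tendsto_of_tendsto_of_tendsto_of_le_of_le' tendsto_const_nhds hupper ?_ ?_
  all_goals filter_upwards [eventually_ge_atTop 0] with t ht
  · exact integral_nonneg ht fun s _ => mul_nonneg (lapZ_nonneg _ _) (lapZ_nonneg _ _)
  · calc _ ≤ 2 * lapZ ν (t / 2) * ∫ s in (0 : ℝ)..t, lapZ ν s :=
          integral_comp_sub_mul_le (continuousOn_lapZ hν') (antitoneOn_lapZ hν')
            (fun _ _ => lapZ_nonneg _ _) ht
      _ ≤ _ := mul_le_mul_of_nonneg_left (integral_lapZ_le hν hinv ht)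
          (mul_nonneg two_pos.le (lapZ_nonneg _ _))

end Laplace

theorem stmt_9_general (μ : Measure ℝ) [IsProbabilityMeasure μ] (hsupp : μ (Set.Iio 0) = 0)
    (hint : IntegrableOn (fun x => x⁻¹) (Set.Ioi 0) μ) :
    ∃ R : ℝ → ℝ, ContinuousOn R (Set.Ici 0) ∧ Tendsto R atTop (nhds 0) ∧
      ∀ t : ℝ, 0 < t →
        (∫ s in (0:ℝ)..t, lapZ μ (t - s) * lapZ μ s)
          = t * (μ {0}).toReal * lapZ μ t
            + 2 * (μ {0}).toReal * (∫ x in Set.Ioi 0, x⁻¹ ∂μ) + R t := by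
  set a := (μ {0}).toReal
  set ν := μ.restrict (Ioi 0)
  set I := ∫ x in Ioi 0, x⁻¹ ∂μ
  have hμ : ∀ᵐ x ∂μ, 0 ≤ x :=
    (measure_eq_zero_iff_ae_notMem.mp hsupp).mono fun _ hx => not_lt.mp hx
  have hν : ∀ᵐ x ∂ν, 0 < x := ae_restrict_mem measurableSet_Ioi
  have hF : ContinuousOn (lapZ ν) (Ici 0) := continuousOn_lapZ (hν.mono fun _ hx => hx.le)
  have hZ : EqOn (lapZ μ) (fun t => a + lapZ ν t) (Ici 0) := fun t ht =>
    lapZ_eq_add_lapZ_restrict_Ioi hμ ht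
  refine ⟨fun t => (∫ s in (0:ℝ)..t, lapZ μ (t - s) * lapZ μ s) - t * a * lapZ μ t
    - 2 * a * I, ?_, ?_, fun t _ => by ring⟩
  · exact ((continuousOn_integral_comp_sub_mul (continuousOn_lapZ hμ)).sub
      ((continuousOn_id.mul continuousOn_const).mul (continuousOn_lapZ hμ))).sub
      continuousOn_const
  · have hlim := ((((tendsto_integral_lapZ hν hint).sub_const I).const_mul (2 * a)).add
      (tendsto_integral_comp_sub_mul_lapZ hν hint)).sub
      ((tendsto_mul_lapZ_atTop hν hint).const_mul a)
    rw [sub_self, mul_zero, zero_add, mul_zero, sub_zero] at hlim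
    refine hlim.congr' ?_
    filter_upwards [eventually_ge_atTop 0] with t ht
    rw [integral_comp_sub_mul_of_eqOn_const_add hZ hF ht, hZ ht]
    ring

/-- If `μ` is a probability measure on `[0,∞)` with `μ({0}) > 0` and
`∫_{(0,∞)} x⁻¹ dμ < ∞`, there is a continuous `R : [0,∞) → ℝ` with `R(t) → 0` such that
`∫₀ᵗ Z_{t-s} Z_s ds = t μ({0}) Z_t + 2 μ({0}) ∫_{(0,∞)} x⁻¹ dμ + R(t)` for `t > 0`. -/
theorem stmt_9 (μ : Measure ℝ) [IsProbabilityMeasure μ] (hsupp : μ (Set.Iio 0) = 0)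
    (hatom : 0 < μ {0})
    (hint : IntegrableOn (fun x => x⁻¹) (Set.Ioi 0) μ) :
    ∃ R : ℝ → ℝ, ContinuousOn R (Set.Ici 0) ∧ Tendsto R atTop (nhds 0) ∧
      ∀ t : ℝ, 0 < t →
        (∫ s in (0:ℝ)..t, lapZ μ (t - s) * lapZ μ s)
          = t * (μ {0}).toReal * lapZ μ t
            + 2 * (μ {0}).toReal * (∫ x in Set.Ioi 0, x⁻¹ ∂μ) + R t :=
  stmt_9_general μ hsupp hint
end
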